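/- arXiv:1806.09517 — 2 statements merged into one kernel-verified Lean document; each statement's English description precedes it below -/
import Mathlib

section
/- Let (X_z)_{z ∈ ℝ} be a real-valued stochastic process such that P(X_{z₁} ≤ X_{z₂}) = 1 whenever z₁ ≤ z₂. Then there exists a modification (X̃_z) of X such that every sample path z ↦ X̃_z(ω) is nondecreasing on ℝ, constructed by setting X̃_z(ω) = lim_{q ↓ z, q ∈ ℚ} X_q(ω) on the exceptional null set. -/
/-!
On a full-measure event the sample path is monotone on `ℚ`, and also on `ℚ ∪ {z}` for any given
`z`, since countably many pairwise comparisons hold almost surely. Keep `X z ω` wherever it is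
monotonically compatible with the rational values and replace it by the right limit
`⨅ q > z, X q ω` along `ℚ` elsewhere: the result is monotone in `z` for every `ω` in the event,
and agrees with `X z` almost surely for each fixed `z`.
-/

open MeasureTheory Set

theorem ae_monotoneOn_of_countable {Ω ι β : Type*} [MeasurableSpace Ω] [Preorder ι] [Preorder β]
    {μ : Measure Ω} {X : ι → Ω → β} {S : Set ι} (hS : S.Countable)
    (hmono : ∀ a ∈ S, ∀ b ∈ S, a ≤ b → ∀ᵐ ω ∂μ, X a ω ≤ X b ω) :
    ∀ᵐ ω ∂μ, MonotoneOn (fun t => X t ω) S := by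
  simp only [MonotoneOn, ae_ball_iff hS, Filter.eventually_imp_distrib_left]
  exact hmono

section RatMonotonization

variable {g : ℝ → ℝ} {z z₁ z₂ : ℝ}

noncomputable def ratRightInf (g : ℝ → ℝ) (z : ℝ) : ℝ :=
  ⨅ q : {q : ℚ // z < q}, g q

open Classical in
noncomputable def ratMonotonization (g : ℝ → ℝ) (z : ℝ) : ℝ :=
  if MonotoneOn g (insert z (range ((↑) : ℚ → ℝ))) then g z else ratRightInf g z

instance (z : ℝ) : Nonempty {q : ℚ // z < q} :=
  let ⟨q, hq⟩ := exists_rat_gt z; ⟨⟨q, hq⟩⟩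

theorem bddBelow_range_ratRightInf (hg : MonotoneOn g (range ((↑) : ℚ → ℝ))) (z : ℝ) :
    BddBelow (range fun q : {q : ℚ // z < q} => g q) := by
  obtain ⟨r, hr⟩ := exists_rat_lt z
  exact ⟨g r, forall_mem_range.2 fun q => hg ⟨r, rfl⟩ ⟨q, rfl⟩ (hr.trans q.2).le⟩

theorem ratRightInf_mono (hg : MonotoneOn g (range ((↑) : ℚ → ℝ))) : Monotone (ratRightInf g) :=
  fun z₁ _ h12 => le_ciInf fun q =>
    ciInf_le (bddBelow_range_ratRightInf hg z₁) ⟨q, h12.trans_lt q.2⟩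

theorem ratMonotonization_eq (h : MonotoneOn g (insert z (range ((↑) : ℚ → ℝ)))) :
    ratMonotonization g z = g z :=
  if_pos h

theorem ratMonotonization_le_ratRightInf : ratMonotonization g z ≤ ratRightInf g z := by
  unfold ratMonotonization
  split_ifs with h
  · exact le_ciInf fun q => h (mem_insert _ _) (mem_insert_of_mem _ ⟨q, rfl⟩) q.2.le
  · exact le_rfl

theorem ratRightInf_le_ratMonotonization (hg : MonotoneOn g (range ((↑) : ℚ → ℝ)))
    (h12 : z₁ < z₂) : ratRightInf g z₁ ≤ ratMonotonization g z₂ := by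
  unfold ratMonotonization
  split_ifs with h
  · obtain ⟨q, hq₁, hq₂⟩ := exists_rat_btwn h12
    exact (ciInf_le (bddBelow_range_ratRightInf hg z₁) ⟨q, hq₁⟩).trans
      (h (mem_insert_of_mem _ ⟨q, rfl⟩) (mem_insert _ _) hq₂.le)
  · exact ratRightInf_mono hg h12.le

theorem monotone_ratMonotonization (hg : MonotoneOn g (range ((↑) : ℚ → ℝ))) :
    Monotone (ratMonotonization g) := by
  intro z₁ z₂ h12
  rcases h12.eq_or_lt with rfl | hlt
  · exact le_rfl
  · exact ratMonotonization_le_ratRightInf.trans (ratRightInf_le_ratMonotonization hg hlt)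

end RatMonotonization

theorem stmt9_general {Ω : Type*} [MeasurableSpace Ω] (P : Measure Ω)
    (X : ℝ → Ω → ℝ)
    (hmono : ∀ z₁ z₂ : ℝ, z₁ ≤ z₂ → ∀ᵐ ω ∂P, X z₁ ω ≤ X z₂ ω) :
    ∃ Xt : ℝ → Ω → ℝ, (∀ z : ℝ, ∀ᵐ ω ∂P, X z ω = Xt z ω) ∧
      ∀ ω : Ω, Monotone fun z => Xt z ω := by
  classical
  let good (ω : Ω) : Prop := MonotoneOn (fun t => X t ω) (range ((↑) : ℚ → ℝ))
  refine ⟨fun z ω => if good ω then ratMonotonization (fun t => X t ω) z else 0, ?_, ?_⟩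
  · intro z
    filter_upwards [ae_monotoneOn_of_countable ((countable_range ((↑) : ℚ → ℝ)).insert z)
      fun a _ b _ => hmono a b] with ω hω
    have hgood : good ω := hω.mono (subset_insert _ _)
    simp only [hgood, if_true, ratMonotonization_eq hω]
  · intro ω
    by_cases hgood : good ω
    · simpa only [hgood, if_true] using monotone_ratMonotonization hgood
    · simpa only [hgood, if_false] using monotone_const

theorem stmt9 {Ω : Type*} [MeasurableSpace Ω] (P : Measure Ω) [IsProbabilityMeasure P]
    (X : ℝ → Ω → ℝ)
    (hmono : ∀ z₁ z₂ : ℝ, z₁ ≤ z₂ → ∀ᵐ ω ∂P, X z₁ ω ≤ X z₂ ω) :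
    ∃ Xt : ℝ → Ω → ℝ, (∀ z : ℝ, ∀ᵐ ω ∂P, X z ω = Xt z ω) ∧
      ∀ ω : Ω, Monotone fun z => Xt z ω :=
  stmt9_general P X hmono
end

section
/- Let P_{X|Z=0} and P_{X|Z=1} be Borel probability measures on ℝ whose supports 𝒳₀ and 𝒳₁ satisfy d_H(𝒳₀, 𝒳₁) > K for some K > 0, where d_H is the Hausdorff distance. Then there is no family of functions g(z,·): [0,1] → ℝ for z ∈ [0,1], jointly measurable, with u ↦ g(z,u) pushing Lebesgue measure to P_{X|Z=z} for z ∈ {0,1}, such that z ↦ g(z,u) is continuous on [0,1] for almost every u and satisfies |g(z₁,u) − g(z₂,u)| ≤ C|z₁−z₂|^r uniformly with fixed finite C and r > 0; i.e., such a uniformly Hölder-in-z generator cannot exist. -/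
/-!
Along almost every path `u`, the points `g 0 u` and `g 1 u` lie in `𝒳₀` and `𝒳₁` and are at
distance at most `C < K`. Hence the closed set of points within `C` of `𝒳₁` is conull for
`P_{X|Z=0}` and so contains its support `𝒳₀`, and symmetrically; this bounds
`d_H(𝒳₀, 𝒳₁)` by `C`.
-/

open MeasureTheory Set Metric

section Coupling

variable {Ω α : Type*} [MeasurableSpace Ω] [PseudoMetricSpace α] [MeasurableSpace α]
  [OpensMeasurableSpace α] {ν : Measure Ω} {f h : Ω → α} {S T : Set α} {C : ℝ}

theorem infDist_le_of_ae_dist_le (hf : AEMeasurable f ν)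
    (hSmin : ∀ F : Set α, IsClosed F → ν.map f Fᶜ = 0 → S ⊆ F) (hT : ∀ᵐ u ∂ν, h u ∈ T)
    (hd : ∀ᵐ u ∂ν, dist (f u) (h u) ≤ C) : ∀ x ∈ S, infDist x T ≤ C := by
  have hF : IsClosed {x | infDist x T ≤ C} := isClosed_le (continuous_infDist_pt T) continuous_const
  refine hSmin _ hF (ae_iff.1 ((ae_map_iff hf hF.measurableSet).2 ?_))
  filter_upwards [hT, hd] with u hu hdu
  exact (infDist_le_dist_of_mem hu).trans hdu

theorem hausdorffDist_le_of_ae_dist_le [NeZero ν] (hf : AEMeasurable f ν) (hh : AEMeasurable h ν)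
    (hS : ν.map f Sᶜ = 0) (hT : ν.map h Tᶜ = 0)
    (hSmin : ∀ F : Set α, IsClosed F → ν.map f Fᶜ = 0 → S ⊆ F)
    (hTmin : ∀ F : Set α, IsClosed F → ν.map h Fᶜ = 0 → T ⊆ F)
    (hd : ∀ᵐ u ∂ν, dist (f u) (h u) ≤ C) : hausdorffDist S T ≤ C := by
  have hfS : ∀ᵐ u ∂ν, f u ∈ S := ae_of_ae_map hf hS
  have hhT : ∀ᵐ u ∂ν, h u ∈ T := ae_of_ae_map hh hT
  have hd' : ∀ᵐ u ∂ν, dist (h u) (f u) ≤ C := by simpa only [dist_comm] using hd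
  obtain ⟨u, hu⟩ := hd.exists
  exact hausdorffDist_le_of_infDist (dist_nonneg.trans hu)
    (infDist_le_of_ae_dist_le hf hSmin hhT hd) (infDist_le_of_ae_dist_le hh hTmin hfS hd')

end Coupling

theorem stmt14_general (μ₀ μ₁ : Measure ℝ)
    (S₀ S₁ : Set ℝ)
    (hS₀ : μ₀ S₀ᶜ = 0) (hS₁ : μ₁ S₁ᶜ = 0)
    (hS₀min : ∀ F : Set ℝ, IsClosed F → μ₀ Fᶜ = 0 → S₀ ⊆ F)
    (hS₁min : ∀ F : Set ℝ, IsClosed F → μ₁ Fᶜ = 0 → S₁ ⊆ F)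
    (K : ℝ) (hH : K < Metric.hausdorffDist S₀ S₁) :
    ¬ ∃ (g : ℝ → ℝ → ℝ) (C r : ℝ), Measurable (Function.uncurry g) ∧
      Measure.map (g 0) (volume.restrict (Icc (0:ℝ) 1)) = μ₀ ∧
      Measure.map (g 1) (volume.restrict (Icc (0:ℝ) 1)) = μ₁ ∧
      0 < r ∧ C < K ∧
      (∀ᵐ u ∂(volume.restrict (Icc (0:ℝ) 1)), Continuous fun z => g z u) ∧
      (∀ z₁ z₂ : ℝ, ∀ᵐ u ∂(volume.restrict (Icc (0:ℝ) 1)),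
        |g z₁ u - g z₂ u| ≤ C * |z₁ - z₂| ^ r) := by
  rintro ⟨g, C, r, hg, rfl, rfl, -, hCK, -, hHolder⟩
  have : NeZero (volume.restrict (Icc (0:ℝ) 1)) := ⟨by simp⟩
  have hd : ∀ᵐ u ∂(volume.restrict (Icc (0:ℝ) 1)), dist (g 0 u) (g 1 u) ≤ C := by
    filter_upwards [hHolder 0 1] with u hu
    simpa [Real.dist_eq] using hu
  have := hausdorffDist_le_of_ae_dist_le hg.of_uncurry_left.aemeasurable
    hg.of_uncurry_left.aemeasurable hS₀ hS₁ hS₀min hS₁min hd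
  linarith

theorem stmt14 (μ₀ μ₁ : Measure ℝ) [IsProbabilityMeasure μ₀] [IsProbabilityMeasure μ₁]
    (S₀ S₁ : Set ℝ) (hS₀c : IsClosed S₀) (hS₁c : IsClosed S₁)
    (hS₀ : μ₀ S₀ᶜ = 0) (hS₁ : μ₁ S₁ᶜ = 0)
    (hS₀min : ∀ F : Set ℝ, IsClosed F → μ₀ Fᶜ = 0 → S₀ ⊆ F)
    (hS₁min : ∀ F : Set ℝ, IsClosed F → μ₁ Fᶜ = 0 → S₁ ⊆ F)
    (K : ℝ) (hK : 0 < K) (hH : K < Metric.hausdorffDist S₀ S₁) :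
    ¬ ∃ (g : ℝ → ℝ → ℝ) (C r : ℝ), Measurable (Function.uncurry g) ∧
      Measure.map (g 0) (volume.restrict (Icc (0:ℝ) 1)) = μ₀ ∧
      Measure.map (g 1) (volume.restrict (Icc (0:ℝ) 1)) = μ₁ ∧
      0 < r ∧ C < K ∧
      (∀ᵐ u ∂(volume.restrict (Icc (0:ℝ) 1)), Continuous fun z => g z u) ∧
      (∀ z₁ z₂ : ℝ, ∀ᵐ u ∂(volume.restrict (Icc (0:ℝ) 1)),
        |g z₁ u - g z₂ u| ≤ C * |z₁ - z₂| ^ r) :=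
  stmt14_general μ₀ μ₁ S₀ S₁ hS₀ hS₁ hS₀min hS₁min K hH
end
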